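/- For n ≥ 3, there is no APN function F : F_2^n → F_2^n having the monomial x_1 x_2 ⋯ x_n (the AND of all coordinates) as a component function; that is, there is no nonzero a ∈ F_2^n with a·F(x) = x_1 x_2 ⋯ x_n for all x. -/

import Mathlib

def IsAPN {n : ℕ} (F : (Fin n → ZMod 2) → (Fin n → ZMod 2)) : Prop :=
  ∀ a : Fin n → ZMod 2, a ≠ 0 → ∀ b : Fin n → ZMod 2,
    (Finset.univ.filter (fun x => F x + F (x + a) = b)).card ≤ 2

def dot {t : ℕ} (a b : Fin t → ZMod 2) : ZMod 2 := ∑ i, a i * b i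

/-!
Write `χ z = (-1)^z`, `W(b) = ∑ₓ χ(b·F x)`, `E = ∑ₓ F x`, and `a^⊥` for the hyperplane
`{v | a·v = 0}`. Since `a·F x = [x = 1]`, for `s ≠ 0` the derivative `x ↦ F x + F (x + s)`,
which is 2-to-1 onto `2^(n-1)` points by APN-ness, has as image `a^⊥` with a single point `w`
replaced by `F 1 + F (1 + s)`. For `n ≥ 3` the elements of `a^⊥` sum to zero, and the image sums
to `E`, so `w = F 1 + F (1 + s) + E`. Feeding this into
`W(b)² = ∑ₛ ∑ₓ χ(b·(F x + F (x + s)))` gives `(W(b) - θ(b))² = 2^n` for every `b ∉ {0, a}`,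
where `θ(b) = χ(b·F 1) - χ(b·(F 1 + E))`. So `n = 2m` and every `W(b) - θ(b)` is `±2^m`.
Take a hyperplane `u^⊥` not containing `a`: summing over its `2^(n-1) - 1` nonzero points gives
an odd multiple of `2^m`, but character sums over `u^⊥` make that sum divisible by `2^(n-1)`,
and `m + 1 ≤ n - 1`.
-/

open Finset Matrix

namespace APN

variable {n : ℕ}

def chi (z : ZMod 2) : ℤ := if z = 0 then 1 else -1

@[simp] lemma chi_zero : chi 0 = 1 := rfl

lemma chi_add (y z : ZMod 2) : chi (y + z) = chi y * chi z := by revert y z; decide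

lemma chi_sq (z : ZMod 2) : chi z ^ 2 = 1 := by revert z; decide

lemma add_add_self {G : Type*} [AddCommGroup G] [Module (ZMod 2) G] (x s : G) :
    x + s + s = x := by
  rw [add_assoc, ZModModule.add_self, add_zero]

lemma exists_insert_eq_insert {α : Type*} [DecidableEq α] {D H : Finset α} {d : α} (hdD : d ∈ D)
    (hdH : d ∉ H) (hsub : D.erase d ⊆ H) (hcard : #D = #H) :
    ∃ w ∉ D, insert w D = insert d H := by
  have hcard' : #(H \ D.erase d) = 1 := by
    rw [card_sdiff_of_subset hsub, card_erase_of_mem hdD, hcard]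
    have : 0 < #D := card_pos.mpr ⟨d, hdD⟩
    omega
  obtain ⟨w, hw⟩ := card_eq_one.mp hcard'
  have hwH : w ∈ H \ D.erase d := hw ▸ mem_singleton_self w
  rw [mem_sdiff, mem_erase, not_and_or, not_not] at hwH
  have hwD : w ∉ D := fun h => hwH.2.elim (fun hwd => hdH (hwd ▸ hwH.1)) (· h)
  refine ⟨w, hwD, ?_⟩
  rw [← union_sdiff_of_subset hsub, hw, ← insert_erase hdD]
  ext x
  simp only [mem_insert, mem_union, mem_erase, mem_singleton]
  tauto

lemma exists_dotProduct_eq_one {v : Fin n → ZMod 2} (hv : v ≠ 0) :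
    ∃ u : Fin n → ZMod 2, u ⬝ᵥ v = 1 := by
  obtain ⟨i, hi⟩ := Function.ne_iff.mp hv
  have h : ∀ z : ZMod 2, z ≠ 0 → z = 1 := by decide
  exact ⟨Pi.single i 1, by rw [single_dotProduct, one_mul, h _ hi]⟩

lemma sum_chi_dotProduct (c : Fin n → ZMod 2) :
    ∑ v, chi (c ⬝ᵥ v) = if c = 0 then 2 ^ n else 0 := by
  split_ifs with hc
  · simp [hc]
  obtain ⟨s, hs⟩ := exists_dotProduct_eq_one hc
  have hshift : ∑ v, chi (c ⬝ᵥ (v + s)) = ∑ v, chi (c ⬝ᵥ v) :=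
    Fintype.sum_equiv (Equiv.addRight s) _ _ fun _ => rfl
  have hflip : ∑ v, chi (c ⬝ᵥ (v + s)) = -∑ v, chi (c ⬝ᵥ v) := by
    rw [← sum_neg_distrib]
    refine sum_congr rfl fun v _ => ?_
    rw [dotProduct_add, dotProduct_comm c s, hs, chi_add]
    simp [chi]
  linarith

def orth (u : Fin n → ZMod 2) : Finset (Fin n → ZMod 2) := univ.filter fun v => u ⬝ᵥ v = 0

@[simp] lemma mem_orth {u v : Fin n → ZMod 2} : v ∈ orth u ↔ u ⬝ᵥ v = 0 := by simp [orth]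

lemma two_mul_sum_orth_chi (u b : Fin n → ZMod 2) :
    2 * ∑ v ∈ orth u, chi (b ⬝ᵥ v) =
      2 ^ n * ((if b = 0 then 1 else 0) + if b = u then 1 else 0) := by
  have hind : ∀ z : ZMod 2, (if z = 0 then 2 else 0 : ℤ) = 1 + chi z := by decide
  have hbu : u + b = 0 ↔ b = u := by rw [← ZModModule.sub_eq_add, sub_eq_zero, eq_comm]
  calc 2 * ∑ v ∈ orth u, chi (b ⬝ᵥ v)
      = ∑ v, (1 + chi (u ⬝ᵥ v)) * chi (b ⬝ᵥ v) := by
        rw [orth, sum_filter, mul_sum]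
        refine sum_congr rfl fun v _ => ?_
        rw [← hind]
        split_ifs <;> ring
    _ = ∑ v, chi (b ⬝ᵥ v) + ∑ v, chi ((u + b) ⬝ᵥ v) := by
        rw [← sum_add_distrib]
        refine sum_congr rfl fun v _ => ?_
        rw [add_dotProduct, chi_add]
        ring
    _ = _ := by
        simp only [sum_chi_dotProduct, hbu]
        split_ifs <;> ring

lemma two_mul_card_orth {u : Fin n → ZMod 2} (hu : u ≠ 0) : 2 * #(orth u) = 2 ^ n := by
  have h := two_mul_sum_orth_chi u 0
  simp only [zero_dotProduct, chi_zero, sum_const, nsmul_one, if_true, Ne.symm hu, if_false,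
    add_zero, mul_one] at h
  exact_mod_cast h

lemma odd_card_orth_erase_zero (hn : 2 ≤ n) {u : Fin n → ZMod 2} (hu : u ≠ 0) :
    Odd #((orth u).erase 0) := by
  have h := two_mul_card_orth hu
  rw [show 2 ^ n = 2 ^ (n - 2) * 2 * 2 by rw [← pow_succ, ← pow_succ]; congr 1; omega] at h
  have := Nat.one_le_two_pow (n := n - 2)
  rw [card_erase_of_mem (by simp)]
  exact ⟨2 ^ (n - 2) - 1, by omega⟩

lemma sum_orth_chi_eq_zero {u b : Fin n → ZMod 2} (hb : b ≠ 0) (hbu : b ≠ u) :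
    ∑ v ∈ orth u, chi (b ⬝ᵥ v) = 0 := by
  have h := two_mul_sum_orth_chi u b
  simp only [hb, hbu, if_false, add_zero, mul_zero] at h
  linarith

lemma two_pow_dvd_sum_orth_chi (u w : Fin n → ZMod 2) :
    (2 : ℤ) ^ (n - 1) ∣ ∑ v ∈ orth u, chi (v ⬝ᵥ w) := by
  cases n with
  | zero => exact one_dvd _
  | succ m =>
    have h := two_mul_sum_orth_chi u w
    simp only [dotProduct_comm w] at h
    rw [pow_succ', mul_assoc] at h
    exact ⟨_, mul_left_cancel₀ two_ne_zero h⟩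

lemma sum_prod_eq_zero {s : Finset (Fin n)} (hs : s ≠ univ) :
    ∑ v : Fin n → ZMod 2, ∏ i ∈ s, v i = 0 := by
  obtain ⟨j, hj⟩ : ∃ j, j ∉ s := by
    by_contra! h
    exact hs (eq_univ_of_forall h)
  have h : ∏ i, ∑ t : ZMod 2, (if i ∈ s then t else 1) = 0 :=
    prod_eq_zero (mem_univ j) (by simp only [hj, if_false]; rfl)
  rw [prod_univ_sum, Fintype.piFinset_univ] at h
  simpa only [Fintype.prod_ite_mem] using h

lemma sum_orth_eq_zero (hn : 3 ≤ n) (u : Fin n → ZMod 2) : ∑ v ∈ orth u, v = 0 := by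
  have hsmall : ∀ i j : Fin n, {j, i} ≠ univ := fun i j h => by
    have := card_le_two (a := j) (b := i)
    rw [h, card_univ, Fintype.card_fin] at this
    omega
  have hmul : ∀ (v : Fin n → ZMod 2) i j, v j * v i = ∏ k ∈ {j, i}, v k := fun v i j => by
    rcases eq_or_ne j i with rfl | hji
    · simp only [insert_eq_of_mem, mem_singleton, prod_singleton]
      generalize v j = z
      revert z
      decide
    · rw [prod_pair hji]
  -- `[z = 0] = 1 + z` in `ZMod 2`: each coordinate of the sum is a sum over the whole cube of
  -- polynomials of degree at most `2 < n`.
  have hind : ∀ y z : ZMod 2, (if z = 0 then y else 0) = y + z * y := by decide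
  ext i
  rw [Finset.sum_apply, orth, sum_filter]
  simp only [hind]
  simp only [dotProduct, sum_mul, sum_add_distrib, mul_assoc, hmul]
  rw [sum_comm]
  simp only [← mul_sum, sum_prod_eq_zero (hsmall _ _), mul_zero, sum_const_zero, add_zero]
  simpa using sum_prod_eq_zero (s := {i}) (by simpa using hsmall i i)

lemma add_mem_orth_iff {u s x : Fin n → ZMod 2} (hus : u ⬝ᵥ s = 1) :
    x + s ∈ orth u ↔ x ∉ orth u := by
  have hflip : ∀ z : ZMod 2, z + 1 = 0 ↔ z ≠ 0 := by decide
  rw [mem_orth, mem_orth, dotProduct_add, hus, hflip]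

lemma sum_eq_sum_orth_add_shift {M : Type*} [AddCommMonoid M] {u s : Fin n → ZMod 2}
    (hus : u ⬝ᵥ s = 1) (f : (Fin n → ZMod 2) → M) :
    ∑ x, f x = ∑ x ∈ orth u, (f x + f (x + s)) := by
  rw [sum_add_distrib, ← sum_filter_add_sum_filter_not univ (fun x => u ⬝ᵥ x = 0)]
  congr 1
  refine sum_nbij' (· + s) (· + s) ?_ ?_ (fun x _ => add_add_self x s)
    (fun x _ => add_add_self x s) (fun x _ => by rw [add_add_self])
  · intro x hx
    exact (add_mem_orth_iff hus).mpr fun h => (mem_filter.mp hx).2 (mem_orth.mp h)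
  · intro x hx
    exact mem_filter.mpr ⟨mem_univ _, fun h => (add_mem_orth_iff hus).mp (mem_orth.mpr h) hx⟩

section derivative

variable {F : (Fin n → ZMod 2) → Fin n → ZMod 2} {s : Fin n → ZMod 2}

lemma injOn_orth_of_isAPN (hF : IsAPN F) {u : Fin n → ZMod 2} (hus : u ⬝ᵥ s = 1) :
    Set.InjOn (fun x => F x + F (x + s)) (orth u) := by
  intro x hx y hy hxy
  by_contra hne
  have hs : s ≠ 0 := by rintro rfl; simp at hus
  have hxs : x + s ∉ orth u := fun h => (add_mem_orth_iff hus).mp h hx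
  have hsub : {x, y, x + s} ⊆ univ.filter fun z => F z + F (z + s) = F x + F (x + s) := by
    intro z hz
    simp only [mem_insert, mem_singleton] at hz
    rcases hz with rfl | rfl | rfl
    · simp
    · simpa using hxy.symm
    · exact mem_filter.mpr ⟨mem_univ _, by rw [add_add_self, add_comm (F _)]⟩
  have h3 : #({x, y, x + s} : Finset _) = 3 :=
    card_eq_three.mpr ⟨x, y, x + s, hne, fun h => hxs (h ▸ hx), fun h => hxs (h ▸ hy), rfl⟩
  have := (card_le_card hsub).trans (hF s hs _)
  omega

def derivImage (F : (Fin n → ZMod 2) → Fin n → ZMod 2) (s : Fin n → ZMod 2) :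
    Finset (Fin n → ZMod 2) :=
  univ.image fun x => F x + F (x + s)

lemma derivative_shift_eq (F : (Fin n → ZMod 2) → Fin n → ZMod 2) (s x : Fin n → ZMod 2) :
    F (x + s) + F (x + s + s) = F x + F (x + s) := by
  rw [add_add_self, add_comm]

lemma sum_derivImage_eq_sum_orth {M : Type*} [AddCommMonoid M] (hF : IsAPN F)
    {u : Fin n → ZMod 2} (hus : u ⬝ᵥ s = 1) (g : (Fin n → ZMod 2) → M) :
    ∑ v ∈ derivImage F s, g v = ∑ x ∈ orth u, g (F x + F (x + s)) := by
  have himage : derivImage F s = (orth u).image fun x => F x + F (x + s) := by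
    refine Subset.antisymm (fun v hv => ?_) (image_subset_image (subset_univ _))
    obtain ⟨x, -, rfl⟩ := mem_image.mp hv
    by_cases hx : x ∈ orth u
    · exact mem_image_of_mem _ hx
    · exact mem_image.mpr ⟨x + s, (add_mem_orth_iff hus).mpr hx, derivative_shift_eq F s x⟩
  rw [himage, sum_image (injOn_orth_of_isAPN hF hus)]

lemma two_mul_card_derivImage (hF : IsAPN F) (hs : s ≠ 0) :
    2 * #(derivImage F s) = 2 ^ n := by
  obtain ⟨u, hus⟩ := exists_dotProduct_eq_one hs
  have hu : u ≠ 0 := by rintro rfl; simp at hus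
  rw [card_eq_sum_ones, sum_derivImage_eq_sum_orth hF hus, ← card_eq_sum_ones,
    two_mul_card_orth hu]

lemma sum_comp_derivative {M : Type*} [AddCommMonoid M] (hF : IsAPN F) (hs : s ≠ 0)
    (g : (Fin n → ZMod 2) → M) :
    ∑ x, g (F x + F (x + s)) = 2 • ∑ v ∈ derivImage F s, g v := by
  obtain ⟨u, hus⟩ := exists_dotProduct_eq_one hs
  rw [sum_eq_sum_orth_add_shift hus, sum_derivImage_eq_sum_orth hF hus, smul_sum]
  simp only [derivative_shift_eq, two_nsmul]

lemma sum_id_derivImage (hF : IsAPN F) (hs : s ≠ 0) :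
    ∑ v ∈ derivImage F s, v = ∑ x, F x := by
  obtain ⟨u, hus⟩ := exists_dotProduct_eq_one hs
  rw [sum_eq_sum_orth_add_shift hus, sum_derivImage_eq_sum_orth hF hus]

end derivative

lemma prod_eq_ite_one (x : Fin n → ZMod 2) : ∏ i, x i = if x = 1 then 1 else 0 := by
  split_ifs with hx
  · simp [hx]
  obtain ⟨i, hi⟩ := Function.ne_iff.mp hx
  have h : ∀ z : ZMod 2, z ≠ 1 → z = 0 := by decide
  exact prod_eq_zero (mem_univ i) (h _ hi)

section component

variable {F : (Fin n → ZMod 2) → Fin n → ZMod 2} {a s b : Fin n → ZMod 2}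

lemma derivative_one_notMem_orth (hcomp : ∀ x, a ⬝ᵥ F x = ∏ i, x i) (hs : s ≠ 0) :
    F 1 + F (1 + s) ∉ orth a := by
  rw [mem_orth, dotProduct_add, hcomp, hcomp, prod_eq_ite_one, prod_eq_ite_one,
    if_neg (fun h => hs (add_eq_left.mp h))]
  simp

lemma exists_insert_derivImage_eq (hF : IsAPN F) (hcomp : ∀ x, a ⬝ᵥ F x = ∏ i, x i)
    (hs : s ≠ 0) :
    ∃ w ∉ derivImage F s, insert w (derivImage F s) = insert (F 1 + F (1 + s)) (orth a) := by
  have ha : a ≠ 0 := by rintro rfl; simpa using hcomp 1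
  refine exists_insert_eq_insert (mem_image_of_mem _ (mem_univ 1))
    (derivative_one_notMem_orth hcomp hs) (fun v hv => ?_) ?_
  · obtain ⟨hvd, hv⟩ := mem_erase.mp hv
    obtain ⟨x, -, rfl⟩ := mem_image.mp hv
    have hx : x ≠ 1 := by rintro rfl; exact hvd rfl
    have hxs : x + s ≠ 1 := by
      rintro h
      rw [← h, add_add_self, add_comm (F x)] at hvd
      exact hvd rfl
    rw [mem_orth, dotProduct_add, hcomp, hcomp, prod_eq_ite_one, prod_eq_ite_one, if_neg hx,
      if_neg hxs, add_zero]
  · have h := two_mul_card_derivImage hF hs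
    rw [← two_mul_card_orth ha] at h
    omega

lemma sum_chi_derivative (hn : 3 ≤ n) (hF : IsAPN F) (hcomp : ∀ x, a ⬝ᵥ F x = ∏ i, x i)
    (hs : s ≠ 0) (hb : b ≠ 0) (hba : b ≠ a) :
    ∑ x, chi (b ⬝ᵥ (F x + F (x + s))) =
      2 * (chi (b ⬝ᵥ (F 1 + F (1 + s))) - chi (b ⬝ᵥ (F 1 + F (1 + s) + ∑ x, F x))) := by
  obtain ⟨w, hw, hinsert⟩ := exists_insert_derivImage_eq hF hcomp hs
  have hd := derivative_one_notMem_orth hcomp hs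
  have hsum := congrArg (fun S => ∑ v ∈ S, v) hinsert
  have hchi := congrArg (fun S => ∑ v ∈ S, chi (b ⬝ᵥ v)) hinsert
  simp only [sum_insert hw, sum_insert hd, sum_id_derivImage hF hs, sum_orth_eq_zero hn,
    sum_orth_chi_eq_zero hb hba, add_zero] at hsum hchi
  have hwE : w = F 1 + F (1 + s) + ∑ x, F x := by
    rw [← hsum, add_add_self]
  rw [sum_comp_derivative hF hs (fun v => chi (b ⬝ᵥ v)), nsmul_eq_mul, Nat.cast_ofNat, ← hwE]
  linarith

end component

def walsh (F : (Fin n → ZMod 2) → Fin n → ZMod 2) (b : Fin n → ZMod 2) : ℤ :=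
  ∑ x, chi (b ⬝ᵥ F x)

lemma walsh_sq (F : (Fin n → ZMod 2) → Fin n → ZMod 2) (b : Fin n → ZMod 2) :
    walsh F b ^ 2 = ∑ s, ∑ x, chi (b ⬝ᵥ (F x + F (x + s))) := by
  rw [sq, walsh, sum_mul_sum, sum_comm (f := fun s x => chi (b ⬝ᵥ (F x + F (x + s))))]
  refine sum_congr rfl fun x _ => (Fintype.sum_equiv (Equiv.addLeft x) _ _ fun s => ?_).symm
  simp only [Equiv.coe_addLeft, dotProduct_add, chi_add]

def walshCorrection (F : (Fin n → ZMod 2) → Fin n → ZMod 2) (b : Fin n → ZMod 2) : ℤ :=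
  chi (b ⬝ᵥ F 1) - chi (b ⬝ᵥ (F 1 + ∑ x, F x))

lemma walsh_sub_walshCorrection_sq {F : (Fin n → ZMod 2) → Fin n → ZMod 2}
    {a b : Fin n → ZMod 2} (hn : 3 ≤ n) (hF : IsAPN F) (hcomp : ∀ x, a ⬝ᵥ F x = ∏ i, x i)
    (hb : b ≠ 0) (hba : b ≠ a) :
    (walsh F b - walshCorrection F b) ^ 2 = 2 ^ n := by
  set c := chi (b ⬝ᵥ F 1)
  set ε := chi (b ⬝ᵥ ∑ x, F x)
  have hθ : walshCorrection F b = c - c * ε := by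
    rw [walshCorrection, dotProduct_add, chi_add]
  have hterm : ∀ s ∈ univ.erase 0, ∑ x, chi (b ⬝ᵥ (F x + F (x + s))) =
      2 * walshCorrection F b * chi (b ⬝ᵥ F (1 + s)) := fun s hs => by
    rw [sum_chi_derivative hn hF hcomp (ne_of_mem_erase hs) hb hba, hθ]
    simp only [dotProduct_add, chi_add]
    ring
  have hzero : ∑ x, chi (b ⬝ᵥ (F x + F (x + 0))) = 2 ^ n := by
    simp [ZModModule.add_self]
  have hshift : ∑ s ∈ univ.erase 0, chi (b ⬝ᵥ F (1 + s)) = walsh F b - c := by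
    have h := add_sum_erase univ (fun s => chi (b ⬝ᵥ F (1 + s))) (mem_univ 0)
    have hperm : ∑ s, chi (b ⬝ᵥ F (1 + s)) = walsh F b :=
      Fintype.sum_equiv (Equiv.addLeft 1) _ _ fun _ => rfl
    rw [hperm, add_zero] at h
    linarith
  have hsq : walsh F b ^ 2 = 2 ^ n + 2 * walshCorrection F b * (walsh F b - c) := by
    rw [walsh_sq, ← add_sum_erase _ _ (mem_univ 0), hzero, sum_congr rfl hterm, ← mul_sum,
      hshift]
  rw [hθ] at hsq ⊢
  linear_combination hsq + c ^ 2 * chi_sq (b ⬝ᵥ ∑ x, F x)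

lemma two_pow_dvd_sum_orth_walsh_sub (F : (Fin n → ZMod 2) → Fin n → ZMod 2)
    (u : Fin n → ZMod 2) :
    (2 : ℤ) ^ (n - 1) ∣ ∑ b ∈ orth u, (walsh F b - walshCorrection F b) := by
  simp only [walsh, walshCorrection, sum_sub_distrib]
  rw [sum_comm]
  exact dvd_sub (dvd_sum fun x _ => two_pow_dvd_sum_orth_chi u (F x))
    (dvd_sub (two_pow_dvd_sum_orth_chi u _) (two_pow_dvd_sum_orth_chi u _))

lemma even_of_sq_eq_two_pow {r : ℤ} (h : r ^ 2 = 2 ^ n) : Even n := by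
  have h2 : r.natAbs ^ 2 = 2 ^ n := by simpa [Int.natAbs_pow] using congrArg Int.natAbs h
  obtain ⟨k, -, hk⟩ := (Nat.dvd_prime_pow Nat.prime_two).mp ⟨r.natAbs, by rw [← h2, sq]⟩
  rw [hk, ← pow_mul] at h2
  exact ⟨k, by have := Nat.pow_right_injective le_rfl h2; omega⟩

lemma not_two_pow_dvd_sum_of_sq_eq {ι : Type*} {s : Finset ι} {f : ι → ℤ} (hn : 3 ≤ n)
    (hs : Odd #s) (hf : ∀ i ∈ s, f i ^ 2 = 2 ^ n) : ¬ (2 : ℤ) ^ (n - 1) ∣ ∑ i ∈ s, f i := by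
  obtain ⟨i, hi⟩ : s.Nonempty := card_pos.mp hs.pos
  obtain ⟨m, rfl⟩ := even_of_sq_eq_two_pow (hf i hi)
  have hmod : ∀ i ∈ s, (2 : ℤ) ^ (m + 1) ∣ f i - 2 ^ m := fun i hi => by
    have hsq : f i ^ 2 = (2 ^ m) ^ 2 := by rw [hf i hi]; ring
    rcases sq_eq_sq_iff_eq_or_eq_neg.mp hsq with h | h
    · rw [h, sub_self]
      exact dvd_zero _
    · exact ⟨-1, by rw [h, pow_succ]; ring⟩
  intro hdvd
  have hsum : (2 : ℤ) ^ (m + 1) ∣ ∑ i ∈ s, f i := (pow_dvd_pow 2 (by omega)).trans hdvd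
  have hcard : (2 : ℤ) ^ (m + 1) ∣ #s * 2 ^ m := by
    have h := dvd_sub hsum (dvd_sum hmod)
    rwa [sum_sub_distrib, sub_sub_cancel, sum_const, nsmul_eq_mul] at h
  obtain ⟨k, hk⟩ := hs
  have hpow : (2 : ℤ) ^ (m + 1) ∣ 2 ^ m := by
    have h := dvd_sub hcard (dvd_mul_left _ (k : ℤ))
    have hexp : (2 : ℤ) ^ m = ((2 * k + 1 : ℕ) : ℤ) * 2 ^ m - k * 2 ^ (m + 1) := by
      push_cast
      ring
    rwa [hk, ← hexp] at h
  have := Int.le_of_dvd (by positivity) hpow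
  have : (0 : ℤ) < 2 ^ m := by positivity
  rw [pow_succ] at *
  linarith

end APN

open APN in
theorem stmt_16_general {n : ℕ} (hn : 3 ≤ n) (F : (Fin n → ZMod 2) → (Fin n → ZMod 2))
    (hF : IsAPN F) (a : Fin n → ZMod 2) :
    ¬ (∀ x : Fin n → ZMod 2, dot a (F x) = ∏ i, x i) := by
  intro hcomp
  have ha : a ≠ 0 := by rintro rfl; simpa [dot] using hcomp 1
  obtain ⟨u, hua⟩ := exists_dotProduct_eq_one ha
  have hu : u ≠ 0 := by rintro rfl; simp at hua
  have hsq : ∀ b ∈ (orth u).erase 0, (walsh F b - walshCorrection F b) ^ 2 = 2 ^ n :=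
    fun b hb => walsh_sub_walshCorrection_sq hn hF hcomp (ne_of_mem_erase hb)
      (by rintro rfl; simp [hua] at hb)
  have hdvd : (2 : ℤ) ^ (n - 1) ∣ ∑ b ∈ (orth u).erase 0, (walsh F b - walshCorrection F b) := by
    have h := two_pow_dvd_sum_orth_walsh_sub F u
    rw [← add_sum_erase _ _ (by simp : (0 : Fin n → ZMod 2) ∈ orth u)] at h
    refine (dvd_add_right ((pow_dvd_pow 2 (Nat.sub_le n 1)).trans ?_)).mp h
    simp [walsh, walshCorrection]
  exact not_two_pow_dvd_sum_of_sq_eq hn (odd_card_orth_erase_zero (by omega) hu) hsq hdvd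

theorem stmt_16 {n : ℕ} (hn : 3 ≤ n) (F : (Fin n → ZMod 2) → (Fin n → ZMod 2))
    (hF : IsAPN F) (a : Fin n → ZMod 2) (ha : a ≠ 0) :
    ¬ (∀ x : Fin n → ZMod 2, dot a (F x) = ∏ i, x i) :=
  stmt_16_general hn F hF a
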